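/- arXiv:1110.4068 — 3 statements merged into one kernel-verified Lean document; each statement's English description precedes it below -/
import Mathlib

section
/- There exists a partial order ≤_P on ℕ whose coded set is co-c.e. and which is not isomorphic to any partial order on ℕ whose coded set is c.e. -/
namespace CEOrders

/-- The coded set of a binary relation on ℕ, via the pairing function `Nat.pair`. -/
def codedSet (R : ℕ → ℕ → Prop) : Set ℕ := {n | R n.unpair.1 n.unpair.2}

/-- A set of naturals is c.e. (computably enumerable). -/
def SetCE (A : Set ℕ) : Prop := REPred (· ∈ A)

/-- A set of naturals is co-c.e. -/
def SetCoCE (A : Set ℕ) : Prop := REPred (· ∉ A)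

/-- A set of naturals is computable. -/
def SetComputable (A : Set ℕ) : Prop := ComputablePred (· ∈ A)

/-- A partial order on ℕ: reflexive, antisymmetric, transitive. -/
def PartialOrderRel (R : ℕ → ℕ → Prop) : Prop :=
  (∀ a, R a a) ∧ (∀ a b, R a b → R b a → a = b) ∧ (∀ a b c, R a b → R b c → R a c)

/-- A preorder on ℕ: reflexive, transitive. -/
def PreorderRel (R : ℕ → ℕ → Prop) : Prop :=
  (∀ a, R a a) ∧ (∀ a b c, R a b → R b c → R a c)

/-- A (simple, undirected) graph on ℕ: irreflexive, symmetric. -/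
def GraphRel (R : ℕ → ℕ → Prop) : Prop :=
  (∀ a, ¬ R a a) ∧ (∀ a b, R a b → R b a)

/-- Isomorphism of binary relations on ℕ. -/
def Isomorphic (R Q : ℕ → ℕ → Prop) : Prop :=
  ∃ f : ℕ → ℕ, Function.Bijective f ∧ ∀ a b, R a b ↔ Q (f a) (f b)

/-- A chain for a relation: any two elements comparable. -/
def ChainFor (R : ℕ → ℕ → Prop) (C : Set ℕ) : Prop :=
  ∀ a ∈ C, ∀ b ∈ C, R a b ∨ R b a

/-- An antichain for a relation: any two distinct elements incomparable. -/
def AntichainFor (R : ℕ → ℕ → Prop) (C : Set ℕ) : Prop :=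
  ∀ a ∈ C, ∀ b ∈ C, a ≠ b → ¬ R a b ∧ ¬ R b a

/-- Partial functions computable relative to an oracle `g`. -/
inductive RecursiveIn (g : ℕ →. ℕ) : (ℕ →. ℕ) → Prop
  | zero : RecursiveIn g (pure 0)
  | succ : RecursiveIn g Nat.succ
  | left : RecursiveIn g ↑fun n : ℕ => n.unpair.1
  | right : RecursiveIn g ↑fun n : ℕ => n.unpair.2
  | oracle : RecursiveIn g g
  | pair {f h} : RecursiveIn g f → RecursiveIn g h →
      RecursiveIn g fun n => Nat.pair <$> f n <*> h n
  | comp {f h} : RecursiveIn g f → RecursiveIn g h →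
      RecursiveIn g fun n => h n >>= f
  | prec {f h} : RecursiveIn g f → RecursiveIn g h →
      RecursiveIn g (Nat.unpaired fun a n =>
        n.rec (f a) fun y IH => do let i ← IH; h (Nat.pair a (Nat.pair y i)))
  | rfind {f} : RecursiveIn g f →
      RecursiveIn g fun a => Nat.rfind fun n => (fun m => m = 0) <$> f (Nat.pair a n)

open Classical in
/-- The characteristic (partial) function of a set of naturals. -/
noncomputable def charFun (A : Set ℕ) : ℕ →. ℕ :=
  fun n => Part.some (if n ∈ A then 1 else 0)

/-- Turing reducibility between sets of naturals. -/
def TuringLE (A B : Set ℕ) : Prop := RecursiveIn (charFun B) (charFun A)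

/-- Turing equivalence between sets of naturals. -/
def TuringEquiv (A B : Set ℕ) : Prop := TuringLE A B ∧ TuringLE B A

/-- The halting set ∅'. -/
def HaltingSet : Set ℕ :=
  {n | ((Denumerable.ofNat Nat.Partrec.Code n).eval n).Dom}

/-- A relation on ℕ is automorphically nontrivial. -/
def AutNontrivial (R : ℕ → ℕ → Prop) : Prop :=
  ¬ ∃ F : Finset ℕ, ∀ f : ℕ → ℕ, Function.Bijective f → (∀ x ∈ F, f x = x) →
      ∀ a b, R a b ↔ R (f a) (f b)

/-!
Block `n` of `ℕ` carries a crown whose comparability graph is a cycle of length `2n + 4` when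
`n ∉ ∅'`, and is an antichain otherwise; the order is co-c.e. because deciding it only requires
waiting for `n` to halt. An injective closed walk of length `L ≥ 3` in a disjoint union of cycles
stays in one cycle and, being unable to turn back, goes around it exactly once. Hence an order
isomorphic to this one has a cycle of length `2n + 4` in its comparability graph iff `n ∉ ∅'`.
For a c.e. order this is a Σ₁ property of `n` (search for the cycle together with a stage by which
all its comparabilities are enumerated), so the complement of `∅'` would be c.e.
-/

open Relation Nat.Partrec

theorem _root_.REPred.comp {α β : Type*} [Primcodable α] [Primcodable β] {p : β → Prop}
    (hp : REPred p) {f : α → β} (hf : Computable f) : REPred fun a => p (f a) :=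
  Partrec.comp hp hf

theorem _root_.REPred.ite {α : Type*} [Primcodable α] {c p q : α → Prop} [DecidablePred c]
    (hc : ComputablePred c) (hp : REPred p) (hq : REPred q) :
    REPred fun a => if c a then p a else q a :=
  (Partrec.cond hc.decide hp hq).dom_re.of_eq fun a => by by_cases h : c a <;> simp [h, Part.assert]

theorem _root_.PrimrecRel.exists_re {α : Type*} [Primcodable α] {p : α → ℕ → Prop}
    (hp : PrimrecRel p) : REPred fun a => ∃ n, p a n := by
  classical
  refine (Partrec.rfind (hp.decide.to_comp.partrec₂)).dom_re.of_eq fun a => ?_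
  simp [Nat.rfind_dom]

theorem _root_.REPred.exists_monotone_primrecRel {p : ℕ → Prop} (hp : REPred p) :
    ∃ B : ℕ → ℕ → Prop, PrimrecRel B ∧ Monotone B ∧ ∀ x, p x ↔ ∃ s, B s x := by
  obtain ⟨c, hc⟩ := Code.exists_code.1 (Partrec.nat_iff.1 (hp.map (Computable.const 0).to₂))
  refine ⟨fun s x => (Code.evaln s c x).isSome, ?_, fun s t hst x => ?_, fun x => ?_⟩
  · refine Primrec₂.primrecRel ?_
    simpa using (Primrec.option_isSome.comp (Code.primrec_evaln.comp
      ((Primrec.fst.pair (Primrec.const c)).pair Primrec.snd))).to₂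
  · simp only [Option.isSome_iff_exists, le_Prop_eq]
    exact fun ⟨y, hy⟩ => ⟨y, Code.evaln_mono hst hy⟩
  · have : p x ↔ (Code.eval c x).Dom := by simp [hc, Part.assert]
    simp only [this, Option.isSome_iff_exists, Part.dom_iff_mem]
    constructor
    · rintro ⟨y, hy⟩
      obtain ⟨s, hs⟩ := Code.evaln_complete.1 hy
      exact ⟨s, y, hs⟩
    · rintro ⟨s, y, hs⟩
      exact ⟨y, Code.evaln_sound hs⟩

theorem _root_.ZMod.eq_of_injective_of_step_eq_one_or_neg_one {L L' : ℕ} [NeZero L'] (hL : 3 ≤ L)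
    {H : ZMod L → ZMod L'} (hinj : Function.Injective H)
    (hstep : ∀ i, H (i + 1) = H i + 1 ∨ H (i + 1) = H i - 1) : L = L' := by
  have : NeZero L := ⟨by omega⟩
  have htwo : (2 : ZMod L) ≠ 0 := by
    intro h
    have := Nat.le_of_dvd two_pos ((ZMod.natCast_eq_zero_iff 2 L).1 (by exact_mod_cast h))
    omega
  -- a walk that turns back revisits a vertex two steps later, which injectivity forbids
  have no_turn : ∀ i, H (i + 1 + 1) - H (i + 1) = H (i + 1) - H i := by
    intro i
    rcases hstep i with h₁ | h₁ <;> rcases hstep (i + 1) with h₂ | h₂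
    · rw [h₂, h₁]; ring
    · exact absurd (by linear_combination hinj (show H (i + 1 + 1) = H i by rw [h₂, h₁]; ring))
        htwo
    · exact absurd (by linear_combination hinj (show H (i + 1 + 1) = H i by rw [h₂, h₁]; ring))
        htwo
    · rw [h₂, h₁]; ring
  set d := H 1 - H 0 with hd
  have hd_sq : d * d = 1 := by
    rcases hstep 0 with h | h <;> rw [zero_add] at h <;> rw [hd, h] <;> ring
  have hconst : ∀ n : ℕ, H ((n : ZMod L) + 1) - H n = d := by
    intro n
    induction n with
    | zero => simp [hd]
    | succ n ih => push_cast; rw [no_turn, ih]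
  have hprog : ∀ n : ℕ, H n = H 0 + n * d := by
    intro n
    induction n with
    | zero => simp
    | succ n ih => push_cast; linear_combination ih + hconst n
  have hdvd : L' ∣ L := by
    rw [← ZMod.natCast_eq_zero_iff]
    linear_combination (-d) * (by simpa using hprog L : H 0 = H 0 + L * d) - L * hd_sq
  have hle : L ≤ L' := by simpa using Fintype.card_le_of_injective H hinj
  exact le_antisymm hle (Nat.le_of_dvd (by omega) hdvd)

/-- Adjacency in the cycle graph on the positions `0, …, L - 1`. -/
def CycleAdj (L p q : ℕ) : Prop :=
  p < L ∧ q < L ∧ ((p + 1) % L = q ∨ (q + 1) % L = p)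

theorem CycleAdj.symm {L p q : ℕ} (h : CycleAdj L p q) : CycleAdj L q p :=
  ⟨h.2.1, h.1, h.2.2.symm⟩

theorem CycleAdj.natCast_eq {L p q : ℕ} (h : CycleAdj L p q) :
    (q : ZMod L) = p + 1 ∨ (q : ZMod L) = p - 1 := by
  rcases h.2.2 with h | h
  · left; rw [← h, ZMod.natCast_mod]; push_cast; ring
  · right; rw [← h, ZMod.natCast_mod]; push_cast; ring

theorem CycleAdj.even_iff {L p q : ℕ} (hL : Even L) (h : CycleAdj L p q) :
    Even p ↔ ¬Even q := by
  rcases h.2.2 with h | h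
  · rw [← h, hL.mod_even_iff, Nat.even_add_one, not_not]
  · rw [← h, hL.mod_even_iff, Nat.even_add_one]

theorem primrecPred_cycleAdj : PrimrecPred fun x : ℕ × ℕ × ℕ => CycleAdj x.1 x.2.1 x.2.2 := by
  have succ_mod (f g : ℕ × ℕ × ℕ → ℕ) (hf : Primrec f) (hg : Primrec g) :
      PrimrecPred fun x => (f x + 1) % x.1 = g x :=
    Primrec.eq.comp (Primrec.nat_mod.comp (Primrec.succ.comp hf) Primrec.fst) hg
  have hp : Primrec fun x : ℕ × ℕ × ℕ => x.2.1 := Primrec.fst.comp Primrec.snd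
  have hq : Primrec fun x : ℕ × ℕ × ℕ => x.2.2 := Primrec.snd.comp Primrec.snd
  exact (Primrec.nat_lt.comp hp Primrec.fst).and ((Primrec.nat_lt.comp hq Primrec.fst).and
    ((succ_mod _ _ hp hq).or (succ_mod _ _ hq hp)))

theorem eq_of_injOn_cycleAdj {L L' : ℕ} (hL : 3 ≤ L) {p : ℕ → ℕ} (hinj : Set.InjOn p (Set.Iio L))
    (hadj : ∀ i < L, CycleAdj L' (p i) (p ((i + 1) % L))) : L = L' := by
  have : NeZero L := ⟨by omega⟩
  have : NeZero L' := ⟨by have := (hadj 0 (by omega)).1; omega⟩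
  have : Fact (1 < L) := ⟨by omega⟩
  refine ZMod.eq_of_injective_of_step_eq_one_or_neg_one hL (H := fun i => (p i.val : ZMod L'))
    ?_ fun i => ?_
  · intro i j hij
    have hi := (hadj i.val i.val_lt).1
    have hj := (hadj j.val j.val_lt).1
    rw [ZMod.natCast_eq_natCast_iff', Nat.mod_eq_of_lt hi, Nat.mod_eq_of_lt hj] at hij
    exact ZMod.val_injective L (hinj i.val_lt j.val_lt hij)
  · have := (hadj i.val i.val_lt).natCast_eq
    rwa [← ZMod.val_one L, ← ZMod.val_add] at this

def IsCycle (R : ℕ → ℕ → Prop) (L : ℕ) (c : ℕ → ℕ) : Prop :=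
  Set.InjOn c (Set.Iio L) ∧ ∀ i < L, SymmGen R (c i) (c ((i + 1) % L))

def HasCycle (R : ℕ → ℕ → Prop) (L : ℕ) : Prop :=
  ∃ c, IsCycle R L c

theorem HasCycle.map {R R' : ℕ → ℕ → Prop} {L : ℕ} {f : ℕ → ℕ} (hf : Function.Injective f)
    (hR : ∀ a b, R a b → R' (f a) (f b)) : HasCycle R L → HasCycle R' L := by
  rintro ⟨c, hinj, hadj⟩
  exact ⟨f ∘ c, hf.comp_injOn hinj, fun i hi => (hadj i hi).imp (hR _ _) (hR _ _)⟩

theorem Isomorphic.hasCycle_iff {R Q : ℕ → ℕ → Prop} (h : Isomorphic R Q) {L : ℕ} :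
    HasCycle R L ↔ HasCycle Q L := by
  obtain ⟨f, hf, hRQ⟩ := h
  refine ⟨HasCycle.map hf.injective fun a b => (hRQ a b).1,
    HasCycle.map (Equiv.ofBijective f hf).symm.injective fun a b hab => ?_⟩
  rwa [hRQ, Equiv.ofBijective_apply_symm_apply f hf, Equiv.ofBijective_apply_symm_apply f hf]

theorem hasCycle_iff_exists_list {R : ℕ → ℕ → Prop} {L : ℕ} :
    HasCycle R L ↔ ∃ l : List ℕ, IsCycle R L (l.getD · 0) := by
  refine ⟨fun ⟨c, hinj, hadj⟩ => ⟨(List.range L).map c, ?_⟩, fun ⟨l, hl⟩ => ⟨_, hl⟩⟩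
  have hc : ∀ i < L, ((List.range L).map c).getD i 0 = c i := fun i hi => by
    simp [hi]
  refine ⟨fun i hi j hj hij => hinj hi hj ?_, fun i hi => ?_⟩ <;> beta_reduce at *
  · rwa [hc i hi, hc j hj] at hij
  · rw [hc i hi, hc _ (Nat.mod_lt _ (by omega))]
    exact hadj i hi

theorem hasCycle_iff_exists_stage {R : ℕ → ℕ → ℕ → Prop} (hR : Monotone R)
    {Q : ℕ → ℕ → Prop} (hQ : ∀ a b, Q a b ↔ ∃ s, R s a b) {L : ℕ} :
    HasCycle Q L ↔ ∃ s, HasCycle (R s) L := by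
  refine ⟨fun ⟨c, hinj, hadj⟩ => ?_,
    fun ⟨s, h⟩ => h.map Function.injective_id fun a b h => (hQ a b).2 ⟨s, h⟩⟩
  have hev : ∀ i ∈ Set.Iio L, ∀ᶠ s in Filter.atTop, SymmGen (R s) (c i) (c ((i + 1) % L)) := by
    intro i hi
    obtain ⟨s, hs⟩ : ∃ s, SymmGen (R s) (c i) (c ((i + 1) % L)) :=
      (hadj i hi).elim (fun h => ((hQ _ _).1 h).imp fun _ => Or.inl)
        (fun h => ((hQ _ _).1 h).imp fun _ => Or.inr)
    exact Filter.eventually_atTop.2 ⟨s, fun t ht => hs.imp (hR ht _ _) (hR ht _ _)⟩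
  obtain ⟨s, hs⟩ := ((Filter.eventually_all_finite (Set.finite_Iio L)).2 hev).exists
  exact ⟨s, c, hinj, hs⟩

theorem _root_.PrimrecRel.forall_lt_primrec {β : Type*} [Primcodable β] {R : ℕ → β → Prop}
    (hR : PrimrecRel R) {f : β → ℕ} (hf : Primrec f) : PrimrecPred fun b => ∀ i < f b, R i b :=
  (hR.forall_mem_list.comp (Primrec.list_range.comp hf) Primrec.id).of_eq fun b => by simp

theorem primrecPred_isCycle {R : ℕ → ℕ → ℕ → Prop}
    (hR : PrimrecPred fun x : ℕ × ℕ × ℕ => R x.1 x.2.1 x.2.2) :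
    PrimrecPred fun x : ℕ × ℕ × List ℕ => IsCycle (R x.1) x.2.1 (x.2.2.getD · 0) := by
  have entry {β : Type} [Primcodable β] {f : β → ℕ × ℕ × List ℕ} {g : β → ℕ}
      (hf : Primrec f) (hg : Primrec g) : Primrec fun b => (f b).2.2.getD (g b) 0 :=
    (Primrec.list_getD 0).comp (Primrec.snd.comp (Primrec.snd.comp hf)) hg
  have hinj : PrimrecRel fun (i : ℕ) (x : ℕ × ℕ × List ℕ) =>
      ∀ j < x.2.1, x.2.2.getD i 0 = x.2.2.getD j 0 → i = j := by
    have hx : Primrec fun y : ℕ × ℕ × ℕ × ℕ × List ℕ => y.2.2 := Primrec.snd.comp Primrec.snd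
    have hi : Primrec fun y : ℕ × ℕ × ℕ × ℕ × List ℕ => y.2.1 := Primrec.fst.comp Primrec.snd
    have : PrimrecRel fun (j : ℕ) (y : ℕ × ℕ × ℕ × List ℕ) =>
        y.2.2.2.getD y.1 0 = y.2.2.2.getD j 0 → y.1 = j :=
      ((Primrec.eq.comp (entry hx hi) (entry hx Primrec.fst)).not.or
        (Primrec.eq.comp hi Primrec.fst)).of_eq fun _ => imp_iff_not_or.symm
    exact this.forall_lt_primrec (Primrec.fst.comp (Primrec.snd.comp Primrec.snd))
  have hadj : PrimrecRel fun (i : ℕ) (x : ℕ × ℕ × List ℕ) =>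
      SymmGen (R x.1) (x.2.2.getD i 0) (x.2.2.getD ((i + 1) % x.2.1) 0) := by
    have hs : Primrec fun y : ℕ × ℕ × ℕ × List ℕ => y.2.1 := Primrec.fst.comp Primrec.snd
    have ha := entry Primrec.snd Primrec.fst
    have hb := entry Primrec.snd (Primrec.nat_mod.comp (Primrec.succ.comp Primrec.fst)
      (Primrec.fst.comp (Primrec.snd.comp Primrec.snd)))
    exact (hR.comp (hs.pair (ha.pair hb))).or (hR.comp (hs.pair (hb.pair ha)))
  have hlen : Primrec fun x : ℕ × ℕ × List ℕ => x.2.1 := Primrec.fst.comp Primrec.snd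
  refine ((hinj.forall_lt_primrec hlen).and (hadj.forall_lt_primrec hlen)).of_eq fun x => ?_
  simp [IsCycle, Set.InjOn]

theorem hasCycle_re {Q : ℕ → ℕ → Prop} (hQ : SetCE (codedSet Q)) : REPred (HasCycle Q) := by
  obtain ⟨B, hBp, hBmono, hB⟩ := REPred.exists_monotone_primrecRel hQ
  have hstage : ∀ L, HasCycle Q L ↔ ∃ s, HasCycle (fun a b => B s (Nat.pair a b)) L :=
    fun L => hasCycle_iff_exists_stage (R := fun s a b => B s (Nat.pair a b))
      (fun s t hst a b => hBmono hst _) fun a b => by simpa [codedSet] using hB (Nat.pair a b)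
  have hsearch : PrimrecRel fun (L k : ℕ) =>
      IsCycle (fun a b => B (Denumerable.ofNat (ℕ × List ℕ) k).1 (Nat.pair a b)) L
        ((Denumerable.ofNat (ℕ × List ℕ) k).2.getD · 0) :=
    have hR : PrimrecPred fun x : ℕ × ℕ × ℕ => B x.1 (Nat.pair x.2.1 x.2.2) :=
      hBp.comp Primrec.fst (Primrec₂.natPair.comp (Primrec.fst.comp Primrec.snd)
        (Primrec.snd.comp Primrec.snd))
    have hk := (Primrec.ofNat (ℕ × List ℕ)).comp Primrec.snd
    (primrecPred_isCycle (R := fun s a b => B s (Nat.pair a b)) hR).comp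
      ((Primrec.fst.comp hk).pair (Primrec.fst.pair (Primrec.snd.comp hk)))
  refine hsearch.exists_re.of_eq fun L => ?_
  rw [hstage]
  simp only [hasCycle_iff_exists_list]
  constructor
  · rintro ⟨k, hk⟩
    exact ⟨_, _, hk⟩
  · rintro ⟨s, l, h⟩
    exact ⟨Encodable.encode (s, l), by simpa using h⟩

theorem haltingSet_re : REPred (· ∈ HaltingSet) :=
  (Code.eval_part.comp (Computable.ofNat Code) Computable.id).dom_re

theorem not_re_compl_haltingSet : ¬REPred (· ∉ HaltingSet) := by
  intro h
  obtain ⟨c, hc⟩ := Code.exists_code.1 (Partrec.nat_iff.1 (h.map (Computable.const 0).to₂))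
  have hdiag : Encodable.encode c ∈ HaltingSet ↔ (Code.eval c (Encodable.encode c)).Dom := by
    simp [HaltingSet, Denumerable.ofNat_encode]
  have hc' : (Code.eval c (Encodable.encode c)).Dom ↔ Encodable.encode c ∉ HaltingSet := by
    simp [hc, Part.assert]
  tauto

def crownLength (n : ℕ) : ℕ := 2 * n + 4

theorem primrec_crownLength : Primrec crownLength :=
  Primrec.nat_add.comp (Primrec.nat_mul.comp (Primrec.const 2) Primrec.id) (Primrec.const 4)

theorem even_crownLength (n : ℕ) : Even (crownLength n) :=
  ⟨n + 2, by unfold crownLength; ring⟩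

/-- Block `n` consists of the numbers `⟨n, j⟩`. For `n ∉ ∅'`, the positions `j < crownLength n`
carry a crown: its comparability graph is the cycle on these positions, with the even positions
minimal. All other elements are incomparable to everything else. -/
def crownOrder (x y : ℕ) : Prop :=
  x = y ∨ (x.unpair.1 = y.unpair.1 ∧ x.unpair.1 ∉ HaltingSet ∧ Even x.unpair.2 ∧
    CycleAdj (crownLength x.unpair.1) x.unpair.2 y.unpair.2)

theorem crownOrder_partialOrder : PartialOrderRel crownOrder := by
  refine ⟨fun _ => Or.inl rfl, ?_, ?_⟩
  · rintro x y (rfl | ⟨-, -, hx, hxy⟩) (hyx | ⟨-, -, hy, -⟩)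
    · rfl
    · rfl
    · exact hyx.symm
    · exact absurd hy ((hxy.even_iff (even_crownLength _)).1 hx)
  · rintro x y z (rfl | hxy) (rfl | hyz)
    · exact Or.inl rfl
    · exact Or.inr hyz
    · exact Or.inr hxy
    · exact absurd hyz.2.2.1 ((hxy.2.2.2.even_iff (even_crownLength _)).1 hxy.2.2.1)

theorem primrecRel_crownOrder_static : PrimrecRel fun x y : ℕ => x.unpair.1 = y.unpair.1 ∧
    Even x.unpair.2 ∧ CycleAdj (crownLength x.unpair.1) x.unpair.2 y.unpair.2 := by
  have hx := Primrec.unpair.comp (Primrec.fst (α := ℕ) (β := ℕ))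
  have hy := Primrec.unpair.comp (Primrec.snd (α := ℕ) (β := ℕ))
  have hEven : PrimrecPred (Even : ℕ → Prop) :=
    (Primrec.eq.comp (Primrec.nat_mod.comp Primrec.id (Primrec.const 2)) (Primrec.const 0)).of_eq
      fun _ => Nat.even_iff.symm
  exact (Primrec.eq.comp (Primrec.fst.comp hx) (Primrec.fst.comp hy)).and
    ((hEven.comp (Primrec.snd.comp hx)).and (primrecPred_cycleAdj.comp
      ((primrec_crownLength.comp (Primrec.fst.comp hx)).pair
        ((Primrec.snd.comp hx).pair (Primrec.snd.comp hy)))))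

theorem coCE_crownOrder : SetCoCE (codedSet crownOrder) := by
  classical
  have hne : PrimrecPred fun m : ℕ => m.unpair.1 ≠ m.unpair.2 :=
    (Primrec.eq.comp (Primrec.fst.comp Primrec.unpair) (Primrec.snd.comp Primrec.unpair)).not
  have hstatic := primrecRel_crownOrder_static.comp (Primrec.fst.comp Primrec.unpair)
    (Primrec.snd.comp Primrec.unpair)
  refine (REPred.ite (hne.and hstatic).computablePred
    (haltingSet_re.comp (Primrec.fst.comp (Primrec.unpair.comp
      (Primrec.fst.comp Primrec.unpair))).to_comp)
    hne.computablePred.to_re).of_eq fun m => ?_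
  simp only [codedSet, crownOrder, Set.mem_ofPred_eq]
  split_ifs <;> tauto

theorem crownOrder_symmGen {x y : ℕ} (h : SymmGen crownOrder x y) (hne : x ≠ y) :
    x.unpair.1 = y.unpair.1 ∧ x.unpair.1 ∉ HaltingSet ∧
      CycleAdj (crownLength x.unpair.1) x.unpair.2 y.unpair.2 := by
  rcases h with (rfl | ⟨hb, hK, -, hadj⟩) | (rfl | ⟨hb, hK, -, hadj⟩)
  · exact absurd rfl hne
  · exact ⟨hb, hK, hadj⟩
  · exact absurd rfl hne
  · rw [← hb]
    exact ⟨rfl, hK, hadj.symm⟩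

theorem hasCycle_crownOrder {n : ℕ} (hn : n ∉ HaltingSet) :
    HasCycle crownOrder (crownLength n) := by
  refine ⟨Nat.pair n, fun i _ j _ h => (Nat.pair_eq_pair.1 h).2, fun i hi => ?_⟩
  have hadj : CycleAdj (crownLength n) i ((i + 1) % crownLength n) :=
    ⟨hi, Nat.mod_lt _ (by unfold crownLength; omega), Or.inl rfl⟩
  by_cases hi : Even i
  · exact Or.inl (Or.inr (by simpa using ⟨hn, hi, hadj⟩))
  · have := (hadj.even_iff (even_crownLength n)).not.1 hi
    exact Or.inr (Or.inr (by simpa using ⟨hn, not_not.1 this, hadj.symm⟩))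

theorem exists_not_halting_of_hasCycle_crownOrder {L : ℕ} (hL : 3 ≤ L)
    (h : HasCycle crownOrder L) : ∃ m ∉ HaltingSet, L = crownLength m := by
  obtain ⟨c, hinj, hadj⟩ := h
  have hsucc : ∀ i < L, (i + 1) % L ≠ i := by
    intro i hi
    rcases Nat.lt_or_ge (i + 1) L with h | h
    · rw [Nat.mod_eq_of_lt h]; omega
    · rw [show i + 1 = L by omega, Nat.mod_self]; omega
  have edge : ∀ i < L, (c i).unpair.1 = (c ((i + 1) % L)).unpair.1 ∧
      (c i).unpair.1 ∉ HaltingSet ∧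
      CycleAdj (crownLength (c i).unpair.1) (c i).unpair.2 (c ((i + 1) % L)).unpair.2 :=
    fun i hi => crownOrder_symmGen (hadj i hi)
      fun h => hsucc i hi (hinj (Nat.mod_lt _ (by omega)) hi h.symm)
  have hblock : ∀ i < L, (c i).unpair.1 = (c 0).unpair.1 := by
    intro i
    induction i with
    | zero => exact fun _ => rfl
    | succ i ih =>
      intro hi
      have := (edge i (by omega)).1
      rw [Nat.mod_eq_of_lt hi] at this
      rw [← this, ih (by omega)]
  refine ⟨(c 0).unpair.1, (edge 0 (by omega)).2.1,
    eq_of_injOn_cycleAdj hL (p := fun i => (c i).unpair.2) (fun i hi j hj hij => ?_)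
      fun i hi => ?_⟩
  · exact hinj hi hj <| Nat.pairEquiv.symm.injective <|
      Prod.ext ((hblock i hi).trans (hblock j hj).symm) hij
  · simpa only [hblock i hi] using (edge i hi).2.2

theorem hasCycle_crownOrder_iff (n : ℕ) :
    HasCycle crownOrder (crownLength n) ↔ n ∉ HaltingSet := by
  refine ⟨fun h => ?_, hasCycle_crownOrder⟩
  obtain ⟨m, hm, hnm⟩ := exists_not_halting_of_hasCycle_crownOrder (by unfold crownLength; omega) h
  rwa [show n = m by unfold crownLength at hnm; omega]

theorem exists_coCE_partialOrder_not_iso_CE :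
    ∃ P : ℕ → ℕ → Prop, PartialOrderRel P ∧ SetCoCE (codedSet P) ∧
      ∀ Q : ℕ → ℕ → Prop, PartialOrderRel Q → SetCE (codedSet Q) → ¬ Isomorphic P Q := by
  refine ⟨crownOrder, crownOrder_partialOrder, coCE_crownOrder, fun Q _ hQ hiso => ?_⟩
  have hcycle : ∀ n, HasCycle Q (crownLength n) ↔ n ∉ HaltingSet := fun n =>
    hiso.hasCycle_iff.symm.trans (hasCycle_crownOrder_iff n)
  exact not_re_compl_haltingSet (((hasCycle_re hQ).comp primrec_crownLength.to_comp).of_eq hcycle)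

end CEOrders
end

section
/- For every co-c.e. preorder ≤_P on ℕ there exists a computable set A ⊆ ℕ × ℕ such that for all i, j ∈ ℕ, i ≤_P j if and only if A_i ⊆ A_j, where A_i denotes the column {n : (i,n) ∈ A}. Consequently every co-c.e. preorder on ℕ is isomorphic to the inclusion order on a computable family of sets. -/
namespace CEOrders

/-!
Fix a stagewise enumeration `e` of the complement of `P`. For a triple `(a, b, t)` such that
`¬ P a b` has appeared by stage `t`, a computable `P`-upward closed set containing `a` but not `b`
is built greedily: `0, 1, 2, …` are placed in turn above or below the cut, `k` going above as soon
as `¬ P k y` has been enumerated for every `y` already below, and below as soon as `¬ P x k` has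
been enumerated for every `x` already above. No instance of `P` ever leads from above to below,
and if `P k y` for some `y` below then transitivity gives `¬ P x k` for every `x` above, so one of
the two searches terminates. Column `(a, b, t)` is this cut (all of `ℕ` for an unconfirmed
triple), so `P i j` gives `A_i ⊆ A_j`, while a triple confirming `¬ P i j` separates `i` from `j`.
-/

structure IsEnumeration (e : ℕ → ℕ → Bool) (p : ℕ → Prop) : Prop where
  mono {t t' n : ℕ} : t ≤ t' → e t n = true → e t' n = true
  exists_iff (n : ℕ) : (∃ t, e t n = true) ↔ p n

theorem IsEnumeration.exists_stage_forall_mem {e : ℕ → ℕ → Bool} {p : ℕ → Prop}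
    (he : IsEnumeration e p) {ι : Type*} {f : ι → ℕ} {L : List ι} (h : ∀ i ∈ L, p (f i)) :
    ∃ t, ∀ i ∈ L, e t (f i) = true := by
  induction L with
  | nil => exact ⟨0, by simp⟩
  | cons i L ih =>
    obtain ⟨t₁, ht₁⟩ := (he.exists_iff _).2 (h i List.mem_cons_self)
    obtain ⟨t₂, ht₂⟩ := ih fun j hj => h j (List.mem_cons_of_mem i hj)
    refine ⟨max t₁ t₂, ?_⟩
    simp only [List.mem_cons, forall_eq_or_imp]
    exact ⟨he.mono (le_max_left _ _) ht₁, fun j hj => he.mono (le_max_right _ _) (ht₂ j hj)⟩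

open Nat.Partrec in
theorem REPred.exists_primrec_isEnumeration {p : ℕ → Prop} (hp : REPred p) :
    ∃ e, Primrec₂ e ∧ IsEnumeration e p := by
  have hpart : Partrec fun n => (Part.assert (p n) fun _ => Part.some ()).map fun _ => (0 : ℕ) :=
    hp.map ((Computable.const 0).comp Computable.fst).to₂
  obtain ⟨c, hc⟩ := Code.exists_code.1 (Partrec.nat_iff.1 hpart)
  refine ⟨fun t n => (c.evaln t n).isSome, ?_, ?_, fun n => ?_⟩
  · exact (Primrec.option_isSome.comp
      (Code.primrec_evaln.comp ((Primrec.fst.pair (Primrec.const c)).pair Primrec.snd))).to₂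
  · intro t t' n htt' h
    obtain ⟨v, hv⟩ := Option.isSome_iff_exists.1 h
    exact Option.isSome_iff_exists.2 ⟨v, Code.evaln_mono htt' hv⟩
  · have hdom : (c.eval n).Dom ↔ p n := by simp [hc, Part.assert]
    simp only [← hdom, Part.dom_iff_mem, Code.evaln_complete, Option.isSome_iff_exists,
      Option.mem_def]
    exact ⟨fun ⟨t, v, hv⟩ => ⟨v, t, hv⟩, fun ⟨v, t, hv⟩ => ⟨t, v, hv⟩⟩

theorem ComputablePred.of_partrec_of_dom {α : Type*} [Primcodable α] {f : α →. Bool}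
    (hf : Partrec f) (hdom : ∀ a, (f a).Dom) : ComputablePred fun a => true ∈ f a :=
  ComputablePred.computable_iff.2 ⟨fun a => (f a).get (hdom a),
    hf.of_eq_tot fun _ => Part.get_mem _,
    funext fun a => propext (Part.get_eq_iff_mem (hdom a)).symm⟩

def Separated (P : ℕ → ℕ → Prop) (s : List ℕ × List ℕ) : Prop :=
  ∀ x ∈ s.1, ∀ y ∈ s.2, ¬ P x y

def aboveCert (e : ℕ → ℕ → Bool) (lower : List ℕ) (k r : ℕ) : Bool :=
  lower.all fun y => e r (Nat.pair k y)

def belowCert (e : ℕ → ℕ → Bool) (upper : List ℕ) (k r : ℕ) : Bool :=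
  upper.all fun x => e r (Nat.pair x k)

def place (e : ℕ → ℕ → Bool) (k : ℕ) (s : List ℕ × List ℕ) : Part (List ℕ × List ℕ) :=
  (Nat.rfind fun r => Part.some (aboveCert e s.2 k r || belowCert e s.1 k r)).map
    fun r => cond (aboveCert e s.2 k r) (k :: s.1, s.2) (s.1, k :: s.2)

def greedy (e : ℕ → ℕ → Bool) (s₀ : List ℕ × List ℕ) (m : ℕ) : Part (List ℕ × List ℕ) :=
  Nat.rec (Part.some s₀) (fun k IH => IH.bind (place e k)) m

def cutMem (e : ℕ → ℕ → Bool) (s₀ : List ℕ × List ℕ) (k : ℕ) : Part Bool :=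
  (greedy e s₀ (k + 1)).map fun s => decide (k ∈ s.1)

section Greedy

variable {P : ℕ → ℕ → Prop} {e : ℕ → ℕ → Bool} {s₀ s s' : List ℕ × List ℕ} {k m : ℕ}

theorem mem_place (h : s' ∈ place e k s) :
    ∃ r, (aboveCert e s.2 k r ∧ s' = (k :: s.1, s.2)) ∨
      (belowCert e s.1 k r ∧ s' = (s.1, k :: s.2)) := by
  obtain ⟨r, hr, rfl⟩ := Part.mem_map_iff _ |>.1 h
  have hcert : (aboveCert e s.2 k r || belowCert e s.1 k r) = true :=
    (Part.mem_some_iff.1 (Nat.rfind_spec hr)).symm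
  refine ⟨r, ?_⟩
  cases hA : aboveCert e s.2 k r
  · exact .inr ⟨by simpa [hA] using hcert, rfl⟩
  · exact .inl ⟨rfl, rfl⟩

theorem subset_of_mem_place (h : s' ∈ place e k s) : s.1 ⊆ s'.1 ∧ s.2 ⊆ s'.2 := by
  obtain ⟨r, ⟨-, rfl⟩ | ⟨-, rfl⟩⟩ := mem_place h <;> simp

theorem mem_of_mem_place (h : s' ∈ place e k s) : k ∈ s'.1 ∨ k ∈ s'.2 := by
  obtain ⟨r, ⟨-, rfl⟩ | ⟨-, rfl⟩⟩ := mem_place h <;> simp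

@[simp] theorem greedy_succ : greedy e s₀ (m + 1) = (greedy e s₀ m).bind (place e m) := rfl

theorem greedy_mono {m m' : ℕ} (hm : m ≤ m') (h : s ∈ greedy e s₀ m) (h' : s' ∈ greedy e s₀ m') :
    s.1 ⊆ s'.1 ∧ s.2 ⊆ s'.2 := by
  induction m', hm using Nat.le_induction generalizing s' with
  | base => rw [Part.mem_unique h h']; simp
  | succ m' _ ih =>
    obtain ⟨s₁, hs₁, hs'⟩ := Part.mem_bind_iff.1 (greedy_succ ▸ h')
    have h₁ := ih hs₁
    have h₂ := subset_of_mem_place hs'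
    exact ⟨List.Subset.trans h₁.1 h₂.1, List.Subset.trans h₁.2 h₂.2⟩

theorem mem_of_mem_greedy_succ (h : s ∈ greedy e s₀ (k + 1)) : k ∈ s.1 ∨ k ∈ s.2 := by
  obtain ⟨_, -, hs⟩ := Part.mem_bind_iff.1 (greedy_succ ▸ h)
  exact mem_of_mem_place hs

theorem true_mem_cutMem_iff : true ∈ cutMem e s₀ k ↔ ∃ s ∈ greedy e s₀ (k + 1), k ∈ s.1 := by
  simp only [cutMem, Part.mem_map_iff, decide_eq_true_eq]

variable (he : IsEnumeration e (· ∉ codedSet P))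
include he

theorem exists_enum_iff {x y : ℕ} : (∃ t, e t (Nat.pair x y) = true) ↔ ¬ P x y := by
  simpa [codedSet] using he.exists_iff (Nat.pair x y)

theorem separated_of_mem_place (hs : Separated P s) (h : s' ∈ place e k s) : Separated P s' := by
  obtain ⟨r, ⟨hA, rfl⟩ | ⟨hB, rfl⟩⟩ := mem_place h
  · intro x hx y hy
    rcases List.mem_cons.1 hx with rfl | hx
    · exact (exists_enum_iff he).1 ⟨r, List.all_eq_true.1 hA y hy⟩
    · exact hs x hx y hy
  · intro x hx y hy
    rcases List.mem_cons.1 hy with rfl | hy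
    · exact (exists_enum_iff he).1 ⟨r, List.all_eq_true.1 hB x hx⟩
    · exact hs x hx y hy

theorem place_dom (htrans : ∀ x y z, P x y → P y z → P x z) (hs : Separated P s) :
    (place e k s).Dom := by
  suffices ∃ r, (aboveCert e s.2 k r || belowCert e s.1 k r) = true by
    obtain ⟨r, hr⟩ := this
    obtain ⟨n, hn, -⟩ :=
      Nat.rfind_min' (p := fun r => aboveCert e s.2 k r || belowCert e s.1 k r) hr
    exact Part.dom_iff_mem.2 ⟨_, Part.mem_map _ hn⟩
  by_cases hk : ∃ y ∈ s.2, P k y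
  · obtain ⟨y, hy, hky⟩ := hk
    have hbelow : ∀ x ∈ s.1, ¬ P x k := fun x hx hxk => hs x hx y hy (htrans _ _ _ hxk hky)
    obtain ⟨r, hr⟩ := he.exists_stage_forall_mem (f := (Nat.pair · k))
      (by simpa [codedSet] using hbelow)
    exact ⟨r, Bool.or_eq_true_iff.2 (.inr (List.all_eq_true.2 hr))⟩
  · obtain ⟨r, hr⟩ := he.exists_stage_forall_mem (f := Nat.pair k)
      (by simpa [codedSet] using hk)
    exact ⟨r, Bool.or_eq_true_iff.2 (.inl (List.all_eq_true.2 hr))⟩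

theorem separated_of_mem_greedy (hs₀ : Separated P s₀) (h : s ∈ greedy e s₀ m) :
    Separated P s := by
  induction m generalizing s with
  | zero => rwa [Part.mem_some_iff.1 h]
  | succ m ih =>
    obtain ⟨s₁, hs₁, hs⟩ := Part.mem_bind_iff.1 (greedy_succ ▸ h)
    exact separated_of_mem_place he (ih hs₁) hs

theorem true_notMem_cutMem_of_mem_snd (hrefl : ∀ x, P x x) (hs₀ : Separated P s₀) {j : ℕ}
    (hj : j ∈ s₀.2) : true ∉ cutMem e s₀ j := by
  rw [true_mem_cutMem_iff]
  rintro ⟨s, hs, hj'⟩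
  exact separated_of_mem_greedy he hs₀ hs j hj' j
    ((greedy_mono (Nat.zero_le _) (Part.mem_some s₀) hs).2 hj) (hrefl j)

variable (htrans : ∀ x y z, P x y → P y z → P x z)
include htrans

theorem greedy_dom (hs₀ : Separated P s₀) (m : ℕ) : (greedy e s₀ m).Dom := by
  induction m with
  | zero => trivial
  | succ m ih =>
    exact ⟨ih, place_dom he htrans (separated_of_mem_greedy he hs₀ (Part.get_mem ih))⟩

theorem cutMem_dom (hs₀ : Separated P s₀) (k : ℕ) : (cutMem e s₀ k).Dom :=
  greedy_dom he htrans hs₀ (k + 1)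

theorem cutMem_upward (hs₀ : Separated P s₀) {i j : ℕ} (hij : P i j)
    (hi : true ∈ cutMem e s₀ i) : true ∈ cutMem e s₀ j := by
  obtain ⟨si, hsi, hi⟩ := true_mem_cutMem_iff.1 hi
  obtain ⟨sj, hsj⟩ := Part.dom_iff_mem.1 (greedy_dom he htrans hs₀ (j + 1))
  refine true_mem_cutMem_iff.2 ⟨sj, hsj, (mem_of_mem_greedy_succ hsj).resolve_right fun hj => ?_⟩
  obtain ⟨s, hs⟩ := Part.dom_iff_mem.1 (greedy_dom he htrans hs₀ (max (i + 1) (j + 1)))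
  exact separated_of_mem_greedy he hs₀ hs i ((greedy_mono (le_max_left _ _) hsi hs).1 hi)
    j ((greedy_mono (le_max_right _ _) hsj hs).2 hj) hij

theorem true_mem_cutMem_of_mem_fst (hs₀ : Separated P s₀) {i : ℕ} (hi : i ∈ s₀.1) :
    true ∈ cutMem e s₀ i := by
  obtain ⟨s, hs⟩ := Part.dom_iff_mem.1 (greedy_dom he htrans hs₀ (i + 1))
  exact true_mem_cutMem_iff.2 ⟨s, hs, (greedy_mono (Nat.zero_le _) (Part.mem_some s₀) hs).1 hi⟩

end Greedy

def seed (e : ℕ → ℕ → Bool) (q : ℕ × ℕ × ℕ) : List ℕ × List ℕ :=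
  cond (e q.2.2 (Nat.pair q.1 q.2.1)) ([q.1], [q.2.1]) ([], [])

theorem separated_seed {P : ℕ → ℕ → Prop} {e : ℕ → ℕ → Bool}
    (he : IsEnumeration e (· ∉ codedSet P)) (q : ℕ × ℕ × ℕ) : Separated P (seed e q) := by
  unfold seed
  cases hq : e q.2.2 (Nat.pair q.1 q.2.1)
  · simp [Separated]
  · simpa [Separated] using (exists_enum_iff he).1 ⟨_, hq⟩

theorem PrimrecRel.list_mem {α : Type*} [Primcodable α] [DecidableEq α] :
    PrimrecRel fun (a : α) (L : List α) => a ∈ L :=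
  ((PrimrecRel.exists_mem_list Primrec.eq).comp Primrec.snd Primrec.fst).of_eq fun _ => by simp

section Computability

open Primrec

variable {e : ℕ → ℕ → Bool} (he : Primrec₂ e)
include he

theorem primrec_aboveCert :
    Primrec₂ fun (lower : List ℕ) (q : ℕ × ℕ) => aboveCert e lower q.1 q.2 := by
  have hR : PrimrecRel fun (y : ℕ) (q : ℕ × ℕ) => e q.2 (Nat.pair q.1 y) = true :=
    Primrec₂.primrecRel <|
      (he.comp (snd.comp snd) (Primrec₂.natPair.comp (fst.comp snd) fst)).to₂.of_eq
        fun _ _ => by simp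
  exact (PrimrecRel.forall_mem_list hR).decide.of_eq fun _ _ => by simp [aboveCert, List.all_eq]

theorem primrec_belowCert :
    Primrec₂ fun (upper : List ℕ) (q : ℕ × ℕ) => belowCert e upper q.1 q.2 := by
  have hR : PrimrecRel fun (x : ℕ) (q : ℕ × ℕ) => e q.2 (Nat.pair x q.1) = true :=
    Primrec₂.primrecRel <|
      (he.comp (snd.comp snd) (Primrec₂.natPair.comp fst (fst.comp snd))).to₂.of_eq
        fun _ _ => by simp
  exact (PrimrecRel.forall_mem_list hR).decide.of_eq fun _ _ => by simp [belowCert, List.all_eq]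

theorem partrec_place : Partrec₂ (place e) := by
  have habove : Primrec₂ fun (a : ℕ × (List ℕ × List ℕ)) (r : ℕ) => aboveCert e a.2.2 a.1 r :=
    (primrec_aboveCert he).comp (snd.comp (snd.comp fst)) ((fst.comp fst).pair snd)
  have hbelow : Primrec₂ fun (a : ℕ × (List ℕ × List ℕ)) (r : ℕ) => belowCert e a.2.1 a.1 r :=
    (primrec_belowCert he).comp (fst.comp (snd.comp fst)) ((fst.comp fst).pair snd)
  have hsearch : Primrec₂ fun (a : ℕ × (List ℕ × List ℕ)) (r : ℕ) =>
      aboveCert e a.2.2 a.1 r || belowCert e a.2.1 a.1 r :=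
    (Primrec.or.comp habove hbelow).to₂
  have hupdate : Primrec₂ fun (a : ℕ × (List ℕ × List ℕ)) (r : ℕ) =>
      cond (aboveCert e a.2.2 a.1 r) (a.1 :: a.2.1, a.2.2) (a.2.1, a.1 :: a.2.2) :=
    (Primrec.cond habove
      ((list_cons.comp (fst.comp fst) (fst.comp (snd.comp fst))).pair (snd.comp (snd.comp fst)))
      ((fst.comp (snd.comp fst)).pair
        (list_cons.comp (fst.comp fst) (snd.comp (snd.comp fst))))).to₂
  exact Partrec.map (Partrec.rfind hsearch.to_comp.partrec₂) hupdate.to_comp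

theorem partrec_greedy : Partrec₂ (greedy e) :=
  Partrec.nat_rec Computable.snd (Partrec.some.comp Computable.fst)
    (Partrec.comp (partrec_place he) Computable.snd).to₂

theorem partrec_cutMem_seed :
    Partrec fun p : ℕ × ℕ => cutMem e (seed e (Denumerable.ofNat (ℕ × ℕ × ℕ) p.2)) p.1 := by
  have hseed : Primrec (seed e) :=
    Primrec.cond (he.comp (snd.comp snd) (Primrec₂.natPair.comp fst (fst.comp snd)))
      ((list_cons.comp fst (const [])).pair (list_cons.comp (fst.comp snd) (const [])))
      (const ([], []))
  have hmem : Computable₂ fun (p : ℕ × ℕ) (s : List ℕ × List ℕ) => decide (p.1 ∈ s.1) :=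
    (PrimrecRel.list_mem.decide.comp (fst.comp fst) (fst.comp snd)).to_comp
  exact Partrec.map ((partrec_greedy he).comp
    (hseed.to_comp.comp ((Computable.ofNat _).comp Computable.snd))
    (Computable.succ.comp Computable.fst)) hmem

end Computability

theorem coCE_preorder_iso_inclusion_on_computable_family :
    ∀ P : ℕ → ℕ → Prop, PreorderRel P → SetCoCE (codedSet P) →
      ∃ A : Set (ℕ × ℕ), ComputablePred (· ∈ A) ∧
        ∀ i j : ℕ, P i j ↔ {n : ℕ | (i, n) ∈ A} ⊆ {n : ℕ | (j, n) ∈ A} := by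
  rintro P ⟨hrefl, htrans⟩ hP
  obtain ⟨e, he_primrec, he⟩ := REPred.exists_primrec_isEnumeration hP
  set seedAt : ℕ → List ℕ × List ℕ := fun n => seed e (Denumerable.ofNat (ℕ × ℕ × ℕ) n)
  have hsep (n : ℕ) : Separated P (seedAt n) := separated_seed he _
  refine ⟨{p | true ∈ cutMem e (seedAt p.2) p.1},
    ComputablePred.of_partrec_of_dom (partrec_cutMem_seed he_primrec)
      fun p => cutMem_dom he htrans (hsep p.2) p.1,
    fun i j => ⟨fun hij n => cutMem_upward he htrans (hsep n) hij, fun hsub => ?_⟩⟩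
  by_contra hij
  obtain ⟨t, ht⟩ := (exists_enum_iff he).2 hij
  have hseed : seedAt (Encodable.encode (i, j, t)) = ([i], [j]) := by simp [seedAt, seed, ht]
  have hi := true_mem_cutMem_of_mem_fst he htrans (hsep (Encodable.encode (i, j, t)))
    (i := i) (by rw [hseed]; simp)
  exact true_notMem_cutMem_of_mem_snd he hrefl (hsep _) (j := j) (by rw [hseed]; simp) (hsub hi)

end CEOrders
end

section
/- There exists a co-c.e. partial order ≤_P on ℕ that has no infinite antichain and such that every infinite chain C for ≤_P computes the halting set, i.e., ∅' ≤_T C. -/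
namespace CEOrders

/-!
Let `A_s` be a computable enumeration of a c.e. set `A` (here `∅'`) and put `a ≤ b` iff `a = b`,
or `a < b` and `A_b` already contains `A ∩ [0, a)`. A failure of `a ≤ b` is witnessed by an
element of `A ∩ [0, a)` showing up after stage `b`, so the order is co-c.e. Every `a` lies below
all sufficiently large `b`, so antichains are finite. In an infinite chain `C`, any `a < b` in `C`
satisfy `a ≤ b`; hence, given `n`, searching `C` for `n < a < b` yields a stage `b` by which
`A` is correct at `n`, and so `A ≤_T C`.
-/

open Nat.Partrec (Code)

namespace RecursiveIn

variable {g : ℕ →. ℕ}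

theorem of_nat_recursiveIn {f : ℕ →. ℕ} (h : Nat.RecursiveIn {g} f) : RecursiveIn g f := by
  induction h with
  | zero => exact .zero
  | succ => exact .succ
  | left => exact .left
  | right => exact .right
  | oracle _ hg => exact (Set.mem_singleton_iff.1 hg) ▸ .oracle
  | pair _ _ ih₁ ih₂ => exact .pair ih₁ ih₂
  | comp _ _ ih₁ ih₂ => exact .comp ih₁ ih₂
  | prec _ _ ih₁ ih₂ => exact .prec ih₁ ih₂
  | rfind _ ih => exact .rfind ih

theorem of_eq {f f' : ℕ →. ℕ} (hf : RecursiveIn g f) (e : ∀ n, f n = f' n) :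
    RecursiveIn g f' :=
  funext e ▸ hf

theorem of_computable {F : ℕ → ℕ} (hF : Computable F) : RecursiveIn g F :=
  of_nat_recursiveIn (Partrec.nat_iff.1 hF.partrec).recursiveIn

theorem comp_total {F G : ℕ → ℕ} (hF : RecursiveIn g F) (hG : RecursiveIn g G) :
    RecursiveIn g fun n => F (G n) :=
  (RecursiveIn.comp hF hG).of_eq fun n => Part.bind_some (G n) _

theorem pair_total {F G : ℕ → ℕ} (hF : RecursiveIn g F) (hG : RecursiveIn g G) :
    RecursiveIn g fun n => Nat.pair (F n) (G n) := by
  simpa [Seq.seq] using RecursiveIn.pair hF hG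

theorem exists_total_search {F : ℕ → ℕ} (hF : RecursiveIn g F)
    (hex : ∀ a, ∃ n, F (Nat.pair a n) = 0) :
    ∃ t : ℕ → ℕ, RecursiveIn g t ∧ ∀ a, F (Nat.pair a (t a)) = 0 := by
  refine ⟨fun a => Nat.find (hex a), (RecursiveIn.rfind hF).of_eq fun a => ?_,
    fun a => Nat.find_spec (hex a)⟩
  refine Part.eq_some_iff.2 (Nat.mem_rfind.2 ⟨?_, fun hm => ?_⟩)
  · simpa using Nat.find_spec (hex a)
  · simpa using Nat.find_min (hex a) hm

end RecursiveIn

theorem exists_recursiveIn_lt_mem {C : Set ℕ} (hC : C.Infinite) :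
    ∃ t : ℕ → ℕ, RecursiveIn (charFun C) t ∧ ∀ n, n < t n ∧ t n ∈ C := by
  classical
  let χ : ℕ → ℕ := fun n => if n ∈ C then 1 else 0
  have hχ : RecursiveIn (charFun C) χ := .oracle
  let test : ℕ → ℕ := fun m =>
    if m.unpair.1.unpair.1 < m.unpair.1.unpair.2 ∧ m.unpair.2 = 1 then 0 else 1
  have htest : Computable test := by
    have hu₁ := Primrec.fst.comp (Primrec.unpair.comp (Primrec.fst.comp Primrec.unpair))
    have hu₂ := Primrec.snd.comp (Primrec.unpair.comp (Primrec.fst.comp Primrec.unpair))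
    have hc := Primrec.snd.comp Primrec.unpair
    exact (Primrec.ite
      ((Primrec.nat_lt.comp hu₁ hu₂).and (Primrec.eq.comp hc (Primrec.const 1)))
      (Primrec.const 0) (Primrec.const 1)).to_comp
  have hF : RecursiveIn (charFun C) fun m => test (Nat.pair m (χ m.unpair.2)) :=
    (RecursiveIn.of_computable htest).comp_total
      ((RecursiveIn.of_computable Computable.id).pair_total
        (hχ.comp_total (RecursiveIn.of_computable (Primrec.snd.comp Primrec.unpair).to_comp)))
  have hex : ∀ n, ∃ k, test (Nat.pair (Nat.pair n k) (χ k)) = 0 := by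
    intro n
    obtain ⟨k, hkC, hnk⟩ := hC.exists_gt n
    exact ⟨k, by simp [test, χ, hnk, hkC]⟩
  obtain ⟨t, ht, hspec⟩ := RecursiveIn.exists_total_search hF (by simpa using hex)
  exact ⟨t, ht, fun n => by simpa [test, χ] using hspec n⟩

theorem REPred.exists_of_computable₂ {α : Type*} [Primcodable α] {f : α → ℕ → Bool}
    (hf : Computable₂ f) : REPred fun a => ∃ n, f a n = true :=
  (Partrec.rfind hf.partrec₂).dom_re.of_eq fun a => by simp [Nat.rfind_dom]

/-- `approx s n`: `n` has been enumerated into `A` by stage `s`. -/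
structure MonotoneApprox (A : Set ℕ) where
  approx : ℕ → ℕ → Bool
  computable : Computable₂ approx
  monotone : ∀ n, Monotone fun s => approx s n
  mem_iff : ∀ n, n ∈ A ↔ ∃ s, approx s n = true

def haltingApprox : MonotoneApprox HaltingSet where
  approx s n := (Code.evaln s (Denumerable.ofNat Code n) n).isSome
  computable := (Primrec.option_isSome.comp (Code.primrec_evaln.comp
    ((Primrec.fst.pair ((Primrec.ofNat Code).comp Primrec.snd)).pair Primrec.snd))).to_comp
  monotone n s t hst := by
    simp only [Bool.le_iff_imp, Option.isSome_iff_exists]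
    exact fun ⟨x, hx⟩ => ⟨x, Code.evaln_mono hst hx⟩
  mem_iff n := by
    simp only [HaltingSet, Part.dom_iff_mem, Code.evaln_complete,
      Option.isSome_iff_exists]
    exact exists_comm

open Filter

namespace MonotoneApprox

variable {A : Set ℕ} (S : MonotoneApprox A)

def settledOrder (a b : ℕ) : Prop :=
  a = b ∨ a < b ∧ ∀ n < a, n ∈ A → S.approx b n = true

theorem mem_of_approx {s n : ℕ} (h : S.approx s n = true) : n ∈ A :=
  (S.mem_iff n).2 ⟨s, h⟩

theorem eventually_approx {n : ℕ} (hn : n ∈ A) : ∀ᶠ s in atTop, S.approx s n = true := by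
  obtain ⟨s, hs⟩ := (S.mem_iff n).1 hn
  exact eventually_atTop.2 ⟨s, fun t hst => Bool.le_iff_imp.1 (S.monotone n hst) hs⟩

theorem settledOrder_partialOrderRel : PartialOrderRel S.settledOrder := by
  refine ⟨fun a => .inl rfl, ?_, ?_⟩
  · rintro a b (rfl | ⟨hab, -⟩) (hba | ⟨hba, -⟩) <;> omega
  · rintro a b c (rfl | ⟨hab, hsab⟩) (rfl | ⟨hbc, hsbc⟩)
    · exact .inl rfl
    · exact .inr ⟨hbc, hsbc⟩
    · exact .inr ⟨hab, hsab⟩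
    · exact .inr ⟨hab.trans hbc, fun n hn => hsbc n (hn.trans hab)⟩

theorem eventually_settledOrder (a : ℕ) : ∀ᶠ b in atTop, S.settledOrder a b := by
  have hsettled : ∀ᶠ b in atTop, ∀ n ∈ {n | n < a} ∩ A, S.approx b n = true :=
    ((Set.finite_lt_nat a).inter_of_left A).eventually_all.2 fun _ hn =>
      S.eventually_approx hn.2
  filter_upwards [eventually_gt_atTop a, hsettled] with b hab hb
  exact .inr ⟨hab, fun n hn hnA => hb n ⟨hn, hnA⟩⟩

theorem antichainFor_settledOrder_finite {C : Set ℕ} (hC : AntichainFor S.settledOrder C) :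
    C.Finite := by
  by_contra hinf
  obtain ⟨a, ha⟩ := Set.Infinite.nonempty hinf
  obtain ⟨b, hbC, hab, hne⟩ := (Nat.frequently_atTop_iff_infinite.2 hinf).and_eventually
    ((S.eventually_settledOrder a).and (eventually_ne_atTop a)) |>.exists
  exact (hC a ha b hbC hne.symm).1 hab

/-- `⟨n, s⟩` refutes `⟨a, b⟩`: `n < a` is enumerated by stage `s` but not by stage `b`. -/
def refutesSettledOrder (p m : ℕ) : Bool :=
  decide (p.unpair.1 ≠ p.unpair.2) && (decide (p.unpair.2 ≤ p.unpair.1) ||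
    decide (m.unpair.1 < p.unpair.1) && S.approx m.unpair.2 m.unpair.1 &&
      !S.approx p.unpair.2 m.unpair.1)

theorem computable₂_refutesSettledOrder : Computable₂ S.refutesSettledOrder := by
  have ha := Primrec.fst.comp (Primrec.unpair.comp (Primrec.fst (α := ℕ) (β := ℕ)))
  have hb := Primrec.snd.comp (Primrec.unpair.comp (Primrec.fst (α := ℕ) (β := ℕ)))
  have hn := Primrec.fst.comp (Primrec.unpair.comp (Primrec.snd (α := ℕ) (β := ℕ)))
  have hs := Primrec.snd.comp (Primrec.unpair.comp (Primrec.snd (α := ℕ) (β := ℕ)))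
  have hand := Primrec.and.to_comp
  have hor := Primrec.or.to_comp
  exact hand.comp (Primrec.eq.not.comp ha hb).decide.to_comp
    (hor.comp (Primrec.nat_le.comp hb ha).decide.to_comp
      (hand.comp (hand.comp (Primrec.nat_lt.comp hn ha).decide.to_comp
        (S.computable.comp hs.to_comp hn.to_comp))
        (Primrec.not.to_comp.comp (S.computable.comp hb.to_comp hn.to_comp))))

theorem not_settledOrder_iff (p : ℕ) :
    ¬ S.settledOrder p.unpair.1 p.unpair.2 ↔ ∃ m, S.refutesSettledOrder p m = true := by
  simp only [settledOrder, refutesSettledOrder, not_or, not_and, not_forall, Bool.and_eq_true,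
    Bool.or_eq_true, decide_eq_true_eq, Bool.not_eq_true']
  constructor
  · rintro ⟨hne, hbad⟩
    rcases le_or_gt p.unpair.2 p.unpair.1 with hba | hab
    · exact ⟨0, hne, .inl hba⟩
    · obtain ⟨n, hn, hnA, hnb⟩ := hbad hab
      obtain ⟨s, hs⟩ := (S.mem_iff n).1 hnA
      exact ⟨Nat.pair n s, hne, .inr (by simpa [hn, hs] using hnb)⟩
  · rintro ⟨m, hne, hba | ⟨⟨hn, hs⟩, hnb⟩⟩
    · exact ⟨hne, fun hab => absurd hab (not_lt.2 hba)⟩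
    · exact ⟨hne, fun _ => ⟨_, hn, S.mem_of_approx hs, by simp [hnb]⟩⟩

theorem setCoCE_codedSet_settledOrder : SetCoCE (codedSet S.settledOrder) :=
  (REPred.exists_of_computable₂ S.computable₂_refutesSettledOrder).of_eq fun p =>
    (S.not_settledOrder_iff p).symm

theorem turingLE_of_recursiveIn_modulus {C : Set ℕ} {t : ℕ → ℕ}
    (ht : RecursiveIn (charFun C) t) (hmod : ∀ n ∈ A, S.approx (t n) n = true) :
    TuringLE A C := by
  let decideAt : ℕ → ℕ := fun m => bif S.approx m.unpair.2 m.unpair.1 then 1 else 0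
  have hdecideAt : Computable decideAt :=
    (S.computable.comp (Primrec.snd.comp Primrec.unpair).to_comp
      (Primrec.fst.comp Primrec.unpair).to_comp).cond (Computable.const 1) (Computable.const 0)
  refine ((RecursiveIn.of_computable hdecideAt).comp_total
    ((RecursiveIn.of_computable Computable.id).pair_total ht)).of_eq fun n => ?_
  have hiff : S.approx (t n) n = true ↔ n ∈ A := ⟨S.mem_of_approx, hmod n⟩
  simp only [decideAt, charFun, id, Nat.unpair_pair, Bool.cond_eq_ite]
  classical
  exact congrArg Part.some (if_congr hiff rfl rfl)

theorem turingLE_of_chainFor_settledOrder {C : Set ℕ} (hC : ChainFor S.settledOrder C)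
    (hinf : C.Infinite) : TuringLE A C := by
  obtain ⟨t, ht, htC⟩ := exists_recursiveIn_lt_mem hinf
  refine S.turingLE_of_recursiveIn_modulus (ht.comp_total ht) fun n hnA => ?_
  obtain ⟨hna, haC⟩ := htC n
  obtain ⟨hab, hbC⟩ := htC (t n)
  obtain h | ⟨-, hsettled⟩ :=
    (hC _ haC _ hbC).resolve_right (by rintro (h | ⟨h, -⟩) <;> omega)
  · omega
  · exact hsettled n hna hnA

end MonotoneApprox

theorem exists_coCE_partialOrder_no_infinite_antichain_chains_compute_haltingSet :
    ∃ P : ℕ → ℕ → Prop, PartialOrderRel P ∧ SetCoCE (codedSet P) ∧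
      (∀ C : Set ℕ, AntichainFor P C → C.Finite) ∧
      (∀ C : Set ℕ, ChainFor P C → C.Infinite → TuringLE HaltingSet C) :=
  ⟨haltingApprox.settledOrder, haltingApprox.settledOrder_partialOrderRel,
    haltingApprox.setCoCE_codedSet_settledOrder,
    fun _ => haltingApprox.antichainFor_settledOrder_finite,
    fun _ => haltingApprox.turingLE_of_chainFor_settledOrder⟩

end CEOrders
end
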